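/- arXiv:1904.06227 — 2 statements merged into one kernel-verified Lean document; each statement's English description precedes it below -/
import Mathlib

section
/- The weakening rule via universal quantifier for inclusion atoms is sound: if M ⊨_X 𝗑 ⊆ 𝗒, then M ⊨_X ∀w(𝗑z ⊆ 𝗒w), for any variable z and any variable w not among 𝗑, 𝗒, z and not in the domain of X. -/
/-! A team member `s(a/w)` is witnessed by `s'(b/w)`, where `s'` witnesses `x ⊆ y` for `s` and
`b = s(a/w)(z)`: since `w` occurs in neither `x` nor `y`, both updates leave those values alone. -/

namespace TeamSem

variable {M : Type}

/-- A team is a set of assignments (variables are natural numbers). -/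
abbrev Team (M : Type) := Set (ℕ → M)

/-- Lax existential extension of a team `X` along variable `x` by a choice function `F`. -/
def extT (X : Team M) (x : ℕ) (F : (ℕ → M) → Set M) : Team M :=
  {t | ∃ s ∈ X, ∃ a ∈ F s, t = Function.update s x a}

/-- Universal extension of a team `X` along variable `x`. -/
def extAll (X : Team M) (x : ℕ) : Team M :=
  {t | ∃ s ∈ X, ∃ a : M, t = Function.update s x a}

/-- Team semantics of the inclusion atom `xs ⊆ ys`. -/
def inclSat (X : Team M) (xs ys : List ℕ) : Prop :=
  ∀ s ∈ X, ∃ s' ∈ X, xs.map s = ys.map s'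

theorem _root_.List.map_update_of_notMem {α β : Type*} [DecidableEq α] (f : α → β) {w : α}
    {l : List α} (hw : w ∉ l) (b : β) : l.map (Function.update f w b) = l.map f :=
  List.map_congr_left fun _ hv => Function.update_of_ne (ne_of_mem_of_not_mem hv hw) _ _

theorem incl_weakening_all_general (X : Team M) (x y : List ℕ) (z w : ℕ)
    (hwx : w ∉ x) (hwy : w ∉ y)
    (h : inclSat X x y) :
    inclSat (extAll X w) (x ++ [z]) (y ++ [w]) := by
  rintro _ ⟨s, hs, a, rfl⟩
  obtain ⟨s', hs', hxy⟩ := h s hs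
  refine ⟨Function.update s' w (Function.update s w a z), ⟨s', hs', _, rfl⟩, ?_⟩
  simp only [List.map_append, List.map_update_of_notMem _ hwx, List.map_update_of_notMem _ hwy,
    hxy, List.map_cons, List.map_nil, Function.update_self]

/-- soundness of the weakening rule via universal quantifier:
from `𝗑 ⊆ 𝗒` infer `∀w(𝗑z ⊆ 𝗒w)` for `w` not among `𝗑, 𝗒, z`. -/
theorem incl_weakening_all (X : Team M) (x y : List ℕ) (z w : ℕ)
    (hlen : x.length = y.length)
    (hwx : w ∉ x) (hwy : w ∉ y) (hwz : w ≠ z)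
    (h : inclSat X x y) :
    inclSat (extAll X w) (x ++ [z]) (y ++ [w]) :=
  incl_weakening_all_general X x y z w hwx hwy h

end TeamSem
end

section
/- The simulation of universal quantifiers by existential quantifiers and inclusion atoms is sound: for a team X with domain exactly the variables 𝗓 and fresh variables 𝗒, M ⊨_X ∀𝗑 φ(𝗑,𝗓) if and only if M ⊨_X ∃𝗑 ∀𝗒 (𝗓𝗒 ⊆ 𝗓𝗑 ∧ φ(𝗑,𝗓)). -/
namespace TeamSem

variable {M : Type}

/-- First-order formulas with semantic atoms depending on a finite list of variables. -/
inductive FOForm (M : Type) where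
  | atom : List ℕ → (List M → Prop) → FOForm M
  | neg  : FOForm M → FOForm M
  | and  : FOForm M → FOForm M → FOForm M
  | or   : FOForm M → FOForm M → FOForm M
  | ex   : ℕ → FOForm M → FOForm M
  | all  : ℕ → FOForm M → FOForm M

/-- Tarskian (single-assignment) satisfaction for first-order formulas. -/
def FOForm.sat : FOForm M → (ℕ → M) → Prop
  | .atom l p, s => p (l.map s)
  | .neg φ, s => ¬ FOForm.sat φ s
  | .and φ ψ, s => FOForm.sat φ s ∧ FOForm.sat ψ s
  | .or φ ψ, s => FOForm.sat φ s ∨ FOForm.sat ψ s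
  | .ex x φ, s => ∃ a : M, FOForm.sat φ (Function.update s x a)
  | .all x φ, s => ∀ a : M, FOForm.sat φ (Function.update s x a)

/-- Free variables of a first-order formula. -/
def FOForm.fv : FOForm M → Set ℕ
  | .atom l _ => {v | v ∈ l}
  | .neg φ => FOForm.fv φ
  | .and φ ψ => FOForm.fv φ ∪ FOForm.fv ψ
  | .or φ ψ => FOForm.fv φ ∪ FOForm.fv ψ
  | .ex x φ => FOForm.fv φ \ {x}
  | .all x φ => FOForm.fv φ \ {x}

/-- Formulas of inclusion logic: first-order formulas (with negation applied
only to first-order formulas), inclusion atoms, ∧, ∨, ∃, ∀. -/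
inductive IncForm (M : Type) where
  | fo   : FOForm M → IncForm M
  | incl : List ℕ → List ℕ → IncForm M
  | and  : IncForm M → IncForm M → IncForm M
  | or   : IncForm M → IncForm M → IncForm M
  | ex   : ℕ → IncForm M → IncForm M
  | all  : ℕ → IncForm M → IncForm M

/-- Lax team semantics for inclusion logic. -/
def IncForm.tsat : IncForm M → Team M → Prop
  | .fo α, X => ∀ s ∈ X, FOForm.sat α s
  | .incl xs ys, X => ∀ s ∈ X, ∃ s' ∈ X, xs.map s = ys.map s'
  | .and φ ψ, X => IncForm.tsat φ X ∧ IncForm.tsat ψ X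
  | .or φ ψ, X => ∃ Y Z : Team M, X = Y ∪ Z ∧ IncForm.tsat φ Y ∧ IncForm.tsat ψ Z
  | .ex x φ, X => ∃ F : (ℕ → M) → Set M, (∀ s ∈ X, (F s).Nonempty) ∧
      IncForm.tsat φ (extT X x F)
  | .all x φ, X => IncForm.tsat φ (extAll X x)

/-- Free variables of an inclusion logic formula. -/
def IncForm.fv : IncForm M → Set ℕ
  | .fo α => FOForm.fv α
  | .incl xs ys => {v | v ∈ xs ∨ v ∈ ys}
  | .and φ ψ => IncForm.fv φ ∪ IncForm.fv ψ
  | .or φ ψ => IncForm.fv φ ∪ IncForm.fv ψ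
  | .ex x φ => IncForm.fv φ \ {x}
  | .all x φ => IncForm.fv φ \ {x}

/-- A block of existential quantifiers. -/
def IncForm.exs (l : List ℕ) (φ : IncForm M) : IncForm M := l.foldr IncForm.ex φ

/-- A block of universal quantifiers. -/
def IncForm.alls (l : List ℕ) (φ : IncForm M) : IncForm M := l.foldr IncForm.all φ

/- By locality, a team formula only sees the restriction of a team to its free
variables.  Forward: quantify `𝗑` universally (the lax `∃` with full choice sets); after
`∀𝗒`, every assignment `s` has a twin with `𝗓𝗑 ↦ s(𝗓𝗒)`, since `𝗑` and `𝗒` range over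
everything, and `φ` still holds because `𝗒` is fresh.  Backward: the inclusion atom forces the
team after `∀𝗒` to realise, on `𝗓𝗑`, every value of `𝗓𝗒`, i.e. every extension of `X` by
arbitrary values of `𝗑`; so on `𝗑𝗓` it coincides with the team of `∀𝗑`. -/

open Set Function

theorem eqOn_update_insert {α β : Type*} [DecidableEq α] {s t : α → β} {W : Set α}
    (h : EqOn s t W) (a : α) (b : β) : EqOn (update s a b) (update t a b) (insert a W) := by
  rintro v (rfl | hv)
  · simp
  · by_cases hva : v = a
    · subst hva; simp
    · simp only [update_of_ne hva, h hv]

theorem exists_eqOn_compl_map_eq {α β : Type*} [DecidableEq α] (u : α → β) {x : List α}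
    (hx : x.Nodup) {vals : List β} (hlen : vals.length = x.length) :
    ∃ s, EqOn u s {v | v ∉ x} ∧ x.map s = vals := by
  induction x generalizing vals with
  | nil => exact ⟨u, eqOn_refl u _, (List.length_eq_zero_iff.mp hlen).symm⟩
  | cons a x ih =>
    obtain ⟨ha, hx⟩ := List.nodup_cons.mp hx
    obtain _ | ⟨b, vals⟩ := vals
    · simp at hlen
    obtain ⟨s, hus, hs⟩ := ih hx (by simpa using hlen)
    refine ⟨update s a b, fun v hv => ?_, ?_⟩
    · have hv : v ≠ a ∧ v ∉ x := by simpa using hv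
      rw [update_of_ne hv.1]
      exact hus hv.2
    · have hsx : x.map (update s a b) = x.map s :=
        List.map_congr_left fun v hv => update_of_ne (ne_of_mem_of_not_mem hv ha) _ _
      simp [hsx, hs]

theorem FOForm.sat_congr (α : FOForm M) {s t : ℕ → M} (h : EqOn s t (FOForm.fv α)) :
    α.sat s ↔ α.sat t := by
  induction α generalizing s t with
  | atom l p =>
    simp only [FOForm.sat, List.map_congr_left fun v hv => h hv]
  | neg φ ih => exact not_congr (ih h)
  | and φ ψ ih₁ ih₂ =>
    exact and_congr (ih₁ (h.mono subset_union_left)) (ih₂ (h.mono subset_union_right))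
  | or φ ψ ih₁ ih₂ =>
    exact or_congr (ih₁ (h.mono subset_union_left)) (ih₂ (h.mono subset_union_right))
  | ex a φ ih =>
    exact exists_congr fun b =>
      ih ((eqOn_update_insert h a b).mono (subset_insert_sdiff_singleton a _))
  | all a φ ih =>
    exact forall_congr' fun b =>
      ih ((eqOn_update_insert h a b).mono (subset_insert_sdiff_singleton a _))

/-- `X ↾ W = Y ↾ W`: the two teams have the same restrictions to the variables in `W`. -/
def AgreeOn (W : Set ℕ) (X Y : Team M) : Prop :=
  (∀ s ∈ X, ∃ t ∈ Y, EqOn s t W) ∧ (∀ t ∈ Y, ∃ s ∈ X, EqOn s t W)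

namespace AgreeOn

variable {W W' : Set ℕ} {X Y Z : Team M}

theorem mono (h : AgreeOn W X Y) (hW : W' ⊆ W) : AgreeOn W' X Y :=
  ⟨fun s hs => (h.1 s hs).imp fun _ ⟨ht, hst⟩ => ⟨ht, hst.mono hW⟩,
   fun t ht => (h.2 t ht).imp fun _ ⟨hs, hst⟩ => ⟨hs, hst.mono hW⟩⟩

theorem trans (hXY : AgreeOn W X Y) (hYZ : AgreeOn W Y Z) : AgreeOn W X Z := by
  refine ⟨fun s hs => ?_, fun u hu => ?_⟩
  · obtain ⟨t, ht, hst⟩ := hXY.1 s hs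
    obtain ⟨u, hu, htu⟩ := hYZ.1 t ht
    exact ⟨u, hu, hst.trans htu⟩
  · obtain ⟨t, ht, htu⟩ := hYZ.2 u hu
    obtain ⟨s, hs, hst⟩ := hXY.2 t ht
    exact ⟨s, hs, hst.trans htu⟩

theorem subteam (h : AgreeOn W X Y) {X' : Team M} (hX' : X' ⊆ X) :
    AgreeOn W X' {t ∈ Y | ∃ s ∈ X', EqOn s t W} := by
  refine ⟨fun s hs => ?_, fun t ⟨_, hst⟩ => hst⟩
  obtain ⟨t, ht, hst⟩ := h.1 s (hX' hs)
  exact ⟨t, ⟨ht, s, hs, hst⟩, hst⟩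

theorem eq_union {X₁ X₂ : Team M} (h : AgreeOn W (X₁ ∪ X₂) Y) :
    Y = {t ∈ Y | ∃ s ∈ X₁, EqOn s t W} ∪ {t ∈ Y | ∃ s ∈ X₂, EqOn s t W} := by
  refine Subset.antisymm (fun t ht => ?_) (union_subset (sep_subset _ _) (sep_subset _ _))
  obtain ⟨s, hs | hs, hst⟩ := h.2 t ht
  · exact Or.inl ⟨ht, s, hs, hst⟩
  · exact Or.inr ⟨ht, s, hs, hst⟩

theorem extAll (h : AgreeOn W X Y) (a : ℕ) :
    AgreeOn (insert a W) (extAll X a) (extAll Y a) := by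
  refine ⟨?_, ?_⟩
  · rintro _ ⟨s, hs, b, rfl⟩
    obtain ⟨t, ht, hst⟩ := h.1 s hs
    exact ⟨_, ⟨t, ht, b, rfl⟩, eqOn_update_insert hst a b⟩
  · rintro _ ⟨t, ht, b, rfl⟩
    obtain ⟨s, hs, hst⟩ := h.2 t ht
    exact ⟨_, ⟨s, hs, b, rfl⟩, eqOn_update_insert hst a b⟩

/-- The choice function for `Y` collects the choices made for all partners in `X`. -/
theorem exists_extT (h : AgreeOn W X Y) (a : ℕ) {F : (ℕ → M) → Set M}
    (hF : ∀ s ∈ X, (F s).Nonempty) :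
    ∃ G : (ℕ → M) → Set M, (∀ t ∈ Y, (G t).Nonempty) ∧
      AgreeOn (insert a W) (extT X a F) (extT Y a G) := by
  refine ⟨fun t => {b | ∃ s ∈ X, EqOn s t W ∧ b ∈ F s}, fun t ht => ?_, ?_, ?_⟩
  · obtain ⟨s, hs, hst⟩ := h.2 t ht
    obtain ⟨b, hb⟩ := hF s hs
    exact ⟨b, s, hs, hst, hb⟩
  · rintro _ ⟨s, hs, b, hb, rfl⟩
    obtain ⟨t, ht, hst⟩ := h.1 s hs
    exact ⟨_, ⟨t, ht, b, ⟨s, hs, hst, hb⟩, rfl⟩, eqOn_update_insert hst a b⟩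
  · rintro _ ⟨t, ht, b, ⟨s, hs, hst, hb⟩, rfl⟩
    exact ⟨_, ⟨s, hs, b, hb, rfl⟩, eqOn_update_insert hst a b⟩

end AgreeOn

theorem IncForm.tsat_of_agreeOn (φ : IncForm M) {W : Set ℕ} {X Y : Team M}
    (hW : φ.fv ⊆ W) (hXY : AgreeOn W X Y) (hX : φ.tsat X) : φ.tsat Y := by
  induction φ generalizing W X Y with
  | fo α =>
    intro t ht
    obtain ⟨s, hs, hst⟩ := hXY.2 t ht
    exact (FOForm.sat_congr α (hst.mono hW)).mp (hX s hs)
  | incl xs ys =>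
    intro t ht
    obtain ⟨s, hs, hst⟩ := hXY.2 t ht
    obtain ⟨s', hs', hss'⟩ := hX s hs
    obtain ⟨t', ht', hs't'⟩ := hXY.1 s' hs'
    refine ⟨t', ht', ?_⟩
    rw [← List.map_congr_left fun v hv => hst (hW (Or.inl hv)), hss',
      List.map_congr_left fun v hv => hs't' (hW (Or.inr hv))]
  | and φ ψ ih₁ ih₂ =>
    exact ⟨ih₁ (subset_union_left.trans hW) hXY hX.1, ih₂ (subset_union_right.trans hW) hXY hX.2⟩
  | or φ ψ ih₁ ih₂ =>
    obtain ⟨X₁, X₂, rfl, h₁, h₂⟩ := hX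
    exact ⟨_, _, hXY.eq_union,
      ih₁ (subset_union_left.trans hW) (hXY.subteam subset_union_left) h₁,
      ih₂ (subset_union_right.trans hW) (hXY.subteam subset_union_right) h₂⟩
  | ex a φ ih =>
    obtain ⟨F, hF, hφ⟩ := hX
    obtain ⟨G, hG, hXYG⟩ := hXY.exists_extT a hF
    exact ⟨G, hG, ih ((subset_insert_sdiff_singleton a _).trans (insert_subset_insert hW))
      hXYG hφ⟩
  | all a φ ih =>
    exact ih ((subset_insert_sdiff_singleton a _).trans (insert_subset_insert hW))
      (hXY.extAll a) hX

theorem mem_foldl_extAll {l : List ℕ} {X : Team M} {t : ℕ → M} :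
    t ∈ l.foldl extAll X ↔ ∃ s ∈ X, EqOn s t {v | v ∉ l} := by
  induction l generalizing X with
  | nil =>
    simp only [List.foldl_nil, List.not_mem_nil, not_false_eq_true, ofPred_true, eqOn_univ]
    exact ⟨fun ht => ⟨t, ht, rfl⟩, fun ⟨s, hs, hst⟩ => hst ▸ hs⟩
  | cons a l ih =>
    rw [List.foldl_cons, ih]
    constructor
    · rintro ⟨_, ⟨s, hs, b, rfl⟩, hst⟩
      refine ⟨s, hs, fun v hv => ?_⟩
      have hv : v ≠ a ∧ v ∉ l := by simpa using hv
      rw [← hst hv.2, update_of_ne hv.1]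
    · rintro ⟨s, hs, hst⟩
      refine ⟨update s a (t a), ⟨s, hs, _, rfl⟩, fun v hv => ?_⟩
      by_cases hva : v = a
      · subst hva; simp
      · rw [update_of_ne hva]
        exact hst (by simpa [hva] using hv)

theorem agreeOn_foldl_extAll (l : List ℕ) (X : Team M) :
    AgreeOn {v | v ∉ l} X (l.foldl extAll X) :=
  ⟨fun s hs => ⟨s, mem_foldl_extAll.mpr ⟨s, hs, eqOn_refl s _⟩, eqOn_refl s _⟩,
   fun _ ht => mem_foldl_extAll.mp ht⟩

theorem IncForm.tsat_alls (φ : IncForm M) (l : List ℕ) (X : Team M) :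
    (IncForm.alls l φ).tsat X ↔ φ.tsat (l.foldl extAll X) := by
  induction l generalizing X with
  | nil => rfl
  | cons a l ih => exact ih (extAll X a)

/-- In lax semantics `∀a` is the instance of `∃a` whose choice sets are all of `M`. -/
theorem IncForm.tsat_exs_of_tsat_alls (φ : IncForm M) (l : List ℕ) (X : Team M)
    (h : (IncForm.alls l φ).tsat X) : (IncForm.exs l φ).tsat X := by
  induction l generalizing X with
  | nil => exact h
  | cons a l ih =>
    have hext : extT X a (fun _ => univ) = extAll X a := by
      ext t; simp [extT, extAll]
    exact ⟨fun _ => univ, fun s _ => ⟨s 0, trivial⟩, hext ▸ ih (extAll X a) h⟩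

theorem agreeOn_extT {W : Set ℕ} {a : ℕ} (ha : a ∉ W) (X : Team M) {F : (ℕ → M) → Set M}
    (hF : ∀ s ∈ X, (F s).Nonempty) : AgreeOn W X (extT X a F) := by
  have hupd : ∀ (s : ℕ → M) b, EqOn s (update s a b) W := fun s b v hv =>
    (update_of_ne (ne_of_mem_of_not_mem hv ha) _ _).symm
  refine ⟨fun s hs => ?_, ?_⟩
  · obtain ⟨b, hb⟩ := hF s hs
    exact ⟨_, ⟨s, hs, b, hb, rfl⟩, hupd s b⟩
  · rintro _ ⟨s, hs, b, -, rfl⟩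
    exact ⟨s, hs, hupd s b⟩

theorem IncForm.exists_agreeOn_of_tsat_exs (φ : IncForm M) (l : List ℕ) (X : Team M)
    (h : (IncForm.exs l φ).tsat X) : ∃ Y, AgreeOn {v | v ∉ l} X Y ∧ φ.tsat Y := by
  induction l generalizing X with
  | nil => exact ⟨X, ⟨fun s hs => ⟨s, hs, eqOn_refl s _⟩, fun s hs => ⟨s, hs, eqOn_refl s _⟩⟩, h⟩
  | cons a l ih =>
    obtain ⟨F, hF, hφ⟩ := h
    obtain ⟨Y, hXY, hY⟩ := ih _ hφ
    refine ⟨Y, (agreeOn_extT (by simp) X hF).trans (hXY.mono fun v hv => ?_), hY⟩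
    exact fun hvl => hv (List.mem_cons_of_mem a hvl)

section Simulation

variable {x y z : List ℕ}

theorem tsat_incl_foldl_extAll (X : Team M) (hlen : y.length = x.length) (hxnd : x.Nodup)
    (hxz : ∀ v ∈ x, v ∉ z) (hyz : ∀ v ∈ y, v ∉ z) :
    (IncForm.incl (M := M) (z ++ y) (z ++ x)).tsat ((x ++ y).foldl extAll X) := by
  intro s hs
  obtain ⟨u, hu, hus⟩ := mem_foldl_extAll.mp hs
  obtain ⟨s', hus', hs'⟩ := exists_eqOn_compl_map_eq u hxnd (vals := y.map s) (by simpa using hlen)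
  refine ⟨s', mem_foldl_extAll.mpr ⟨u, hu, hus'.mono fun v (hv : v ∉ x ++ y) hvx => hv (List.mem_append_left y hvx)⟩, ?_⟩
  have hz : z.map s = z.map s' := List.map_congr_left fun v hv =>
    have hv : v ∉ x ++ y := by simpa using ⟨fun h => hxz v h hv, fun h => hyz v h hv⟩
    (hus hv).symm.trans (hus' fun h => hv (List.mem_append_left y h))
  simp only [List.map_append, hz, hs']

theorem agreeOn_of_tsat_incl {X W : Team M} (hlen : y.length = x.length) (hxnd : x.Nodup)
    (hynd : y.Nodup) (hxz : ∀ v ∈ x, v ∉ z) (hyz : ∀ v ∈ y, v ∉ z)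
    (hXW : AgreeOn {v | v ∉ x} X W)
    (hincl : (IncForm.incl (M := M) (z ++ y) (z ++ x)).tsat (y.foldl extAll W)) :
    AgreeOn {v | v ∈ x ∨ v ∈ z} (y.foldl extAll W) (x.foldl extAll X) := by
  have hzx : ∀ v ∈ z, v ∉ x := fun v hv h => hxz v h hv
  have hzy : ∀ v ∈ z, v ∉ y := fun v hv h => hyz v h hv
  constructor
  · intro t ht
    obtain ⟨w, hw, hwt⟩ := mem_foldl_extAll.mp ht
    obtain ⟨u, hu, huw⟩ := hXW.2 w hw
    obtain ⟨s, hus, hs⟩ := exists_eqOn_compl_map_eq u hxnd (vals := x.map t) (by simp)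
    refine ⟨s, mem_foldl_extAll.mpr ⟨u, hu, hus⟩, ?_⟩
    rintro v (hv | hv)
    · exact (List.map_inj_left.mp hs v hv).symm
    · calc t v = w v := (hwt (hzy v hv)).symm
        _ = u v := (huw (hzx v hv)).symm
        _ = s v := hus (hzx v hv)
  · intro s hs
    obtain ⟨u, hu, hus⟩ := mem_foldl_extAll.mp hs
    obtain ⟨w, hw, huw⟩ := hXW.1 u hu
    -- `t₀` copies `s(𝗑)` onto `𝗒`; the inclusion atom then yields `t` with `t(𝗓𝗑) = t₀(𝗓𝗒)`.
    obtain ⟨t₀, hwt₀, ht₀⟩ := exists_eqOn_compl_map_eq w hynd (vals := x.map s) (by simp [hlen])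
    obtain ⟨t, ht, hmap⟩ := hincl t₀ (mem_foldl_extAll.mpr ⟨w, hw, hwt₀⟩)
    obtain ⟨hz, hx⟩ := List.append_inj (by simpa only [List.map_append] using hmap) (by simp)
    refine ⟨t, ht, ?_⟩
    rintro v (hv | hv)
    · exact List.map_inj_left.mp (hx.symm.trans ht₀) v hv
    · calc t v = t₀ v := (List.map_inj_left.mp hz v hv).symm
        _ = w v := (hwt₀ (hzy v hv)).symm
        _ = u v := (huw (hzx v hv)).symm
        _ = s v := hus (hzx v hv)

end Simulation

theorem forall_simulation_general (φ : IncForm M) (x y z : List ℕ) (X : Team M)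
    (hlen : y.length = x.length)
    (hxnd : x.Nodup) (hynd : y.Nodup)
    (hxz : ∀ v ∈ x, v ∉ z)
    (hyz : ∀ v ∈ y, v ∉ z)
    (hyfv : ∀ v ∈ y, v ∉ IncForm.fv φ)
    (hfv : IncForm.fv φ ⊆ {v | v ∈ x ∨ v ∈ z}) :
    IncForm.tsat (IncForm.alls x φ) X ↔
      IncForm.tsat (IncForm.exs x (IncForm.alls y
        (.and (.incl (z ++ y) (z ++ x)) φ))) X := by
  rw [IncForm.tsat_alls]
  constructor
  · intro h
    refine IncForm.tsat_exs_of_tsat_alls _ x X ?_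
    rw [IncForm.tsat_alls, IncForm.tsat_alls, ← List.foldl_append]
    refine ⟨tsat_incl_foldl_extAll X hlen hxnd hxz hyz, ?_⟩
    rw [List.foldl_append]
    exact φ.tsat_of_agreeOn (fun v hv hvy => hyfv v hvy hv) (agreeOn_foldl_extAll y _) h
  · intro h
    obtain ⟨W, hXW, hW⟩ := IncForm.exists_agreeOn_of_tsat_exs _ x X h
    obtain ⟨hincl, hφ⟩ := (IncForm.tsat_alls _ y W).mp hW
    exact φ.tsat_of_agreeOn hfv (agreeOn_of_tsat_incl hlen hxnd hynd hxz hyz hXW hincl) hφ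

/-- soundness of the simulation of universal quantifiers by
existential quantifiers and inclusion atoms:
`∀𝗑 φ(𝗑,𝗓) ≡ ∃𝗑 ∀𝗒 (𝗓𝗒 ⊆ 𝗓𝗑 ∧ φ(𝗑,𝗓))` for fresh `𝗒`. -/
theorem forall_simulation (φ : IncForm M) (x y z : List ℕ) (X : Team M)
    (hlen : y.length = x.length)
    (hxnd : x.Nodup) (hynd : y.Nodup)
    (hxz : ∀ v ∈ x, v ∉ z)
    (hyx : ∀ v ∈ y, v ∉ x) (hyz : ∀ v ∈ y, v ∉ z)
    (hyfv : ∀ v ∈ y, v ∉ IncForm.fv φ)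
    (hfv : IncForm.fv φ ⊆ {v | v ∈ x ∨ v ∈ z}) :
    IncForm.tsat (IncForm.alls x φ) X ↔
      IncForm.tsat (IncForm.exs x (IncForm.alls y
        (.and (.incl (z ++ y) (z ++ x)) φ))) X :=
  forall_simulation_general φ x y z X hlen hxnd hynd hxz hyz hyfv hfv

end TeamSem
end
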